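/- Let F be a field, m ≥ 2, and N an m × m matrix over F. Let g be the (m+1)-dimensional Lie algebra with basis (e_1, …, e_m, e_{m+1}) and brackets [e_j, e_k] = 0 for 1 ≤ j,k ≤ m and [e_k, e_{m+1}] = Σ_{l=1}^{m} N_{kl} e_l for 1 ≤ k ≤ m. If there exists a vector v in the kernel of N that does not lie in the image (range) of N, then g is decomposable: g is the direct sum of two nonzero ideals. -/

import Mathlib

/-!
The vector `v` yields the central element `z = ∑ v k • e k`: it commutes with `e (m + 1)` because
`v N = 0`. The derived algebra is spanned by the brackets `⁅e k, e (m + 1)⁆ = ∑ N k l • e l`, so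
`z` lies outside it because `v` is not in the image of `N`. A linear form that vanishes on the
derived algebra but not at `z` then has as kernel an ideal complementary to the central line `F ∙ z`.
-/

namespace LieIdeal

variable {R L : Type*} [CommRing R] [LieRing L] [LieAlgebra R L]

def ofLeCenter (p : Submodule R L) (hp : p ≤ LieAlgebra.center R L) : LieIdeal R L where
  toSubmodule := p
  lie_mem {x y} hy := by
    rw [(LieModule.mem_maxTrivSubmodule R L L y).mp (hp hy) x]
    exact p.zero_mem

def ofDerivedSeriesLe (p : Submodule R L) (hp : LieAlgebra.derivedSeries R L 1 ≤ p) :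
    LieIdeal R L where
  toSubmodule := p
  lie_mem _ := hp (LieSubmodule.lie_mem_lie (LieSubmodule.mem_top _) (LieSubmodule.mem_top _))

end LieIdeal

namespace LieAlgebra

section CommRing

variable {R L : Type*} [CommRing R] [LieRing L] [LieAlgebra R L] {s : Set L}

theorem mem_center_of_span_eq_top (hs : Submodule.span R s = ⊤) {z : L}
    (h : ∀ x ∈ s, ⁅x, z⁆ = 0) : z ∈ center R L := by
  have had : ad R L z = 0 := LinearMap.ext_on hs fun x hx ↦ by
    rw [ad_apply, ← lie_skew, h x hx, neg_zero, LinearMap.zero_apply]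
  refine (LieModule.mem_maxTrivSubmodule R L L z).mpr fun x ↦ ?_
  rw [← lie_skew, ← ad_apply R, had, LinearMap.zero_apply, neg_zero]

theorem derivedSeries_one_le_of_span_eq_top (hs : Submodule.span R s = ⊤) {p : Submodule R L}
    (h : ∀ x ∈ s, ∀ y ∈ s, ⁅x, y⁆ ∈ p) : derivedSeries R L 1 ≤ p := by
  have hlie : ((LieModule.toEnd R L L : L →ₗ[R] Module.End R L).compr₂ p.mkQ) = 0 :=
    LinearMap.ext_on hs fun x hx ↦ LinearMap.ext_on hs fun y hy ↦ by
      simpa using h x hx y hy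
  rw [coe_derivedSeries_one_eq, Submodule.span_le]
  rintro _ ⟨x, y, rfl⟩
  simpa using LinearMap.congr_fun₂ hlie x y

end CommRing

variable {F L : Type*} [Field F] [LieRing L] [LieAlgebra F L] {z : L}

theorem exists_isCompl_of_mem_center_of_notMem_derivedSeries (hzc : z ∈ center F L)
    (hzd : z ∉ derivedSeries F L 1) (hrank : 1 < Module.rank F L) :
    ∃ I J : LieIdeal F L, I ≠ ⊥ ∧ J ≠ ⊥ ∧ IsCompl I J := by
  obtain ⟨φ, hφz, hφd⟩ := Submodule.exists_dual_map_eq_bot_of_notMem hzd inferInstance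
  let I := LieIdeal.ofLeCenter (F ∙ z) ((Submodule.span_singleton_le_iff_mem _ _).mpr hzc)
  let J := LieIdeal.ofDerivedSeriesLe (LinearMap.ker φ) (Submodule.map_le_iff_le_comap.mp hφd.le)
  have hIJ : IsCompl I J := by
    rw [← LieSubmodule.isCompl_toSubmodule]
    exact (Submodule.isCompl_span_singleton_of_isCoatom_of_notMem
      (LinearMap.isCoatom_ker_of_surjective (LinearMap.surjective (by aesop))) hφz).symm
  refine ⟨I, J, fun hI ↦ hzd ?_, fun hJ ↦ hrank.not_ge ?_, hIJ⟩
  · have hzI : z ∈ I := Submodule.mem_span_singleton_self z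
    rw [hI, LieSubmodule.mem_bot] at hzI
    exact hzI ▸ zero_mem _
  · have hspan : F ∙ z = ⊤ := by
      have hItop := congrArg LieSubmodule.toSubmodule hIJ.sup_eq_top
      rwa [hJ, sup_bot_eq, LieSubmodule.top_toSubmodule] at hItop
    calc Module.rank F L = Module.rank F (⊤ : Submodule F L) := (rank_top F L).symm
      _ = Module.rank F (F ∙ z) := by rw [hspan]
      _ ≤ 1 := (rank_span_le _).trans_eq (Cardinal.mk_singleton z)

end LieAlgebra

theorem range_fin_val_add_one (n : ℕ) :
    Set.range (fun i : Fin n ↦ i.val + 1) = ↑(Finset.Icc 1 n) := by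
  ext k
  simp only [Set.mem_range, Finset.coe_Icc, Set.mem_Icc]
  exact ⟨by rintro ⟨i, rfl⟩; omega, fun h ↦ ⟨⟨k - 1, by omega⟩, Nat.sub_add_cancel h.1⟩⟩

section StructureConstants

open Finset

variable {F L : Type*} [Field F] [LieRing L] [LieAlgebra F L] {m : ℕ} {e : ℕ → L}
  {N : ℕ → ℕ → F}

theorem sum_smul_lie_eq_sum_smul
    (heN : ∀ k : ℕ, 1 ≤ k → k ≤ m → ⁅e k, e (m + 1)⁆ = ∑ l ∈ Icc 1 m, N k l • e l)
    (w : ℕ → F) :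
    ∑ k ∈ Icc 1 m, w k • ⁅e k, e (m + 1)⁆ = ∑ l ∈ Icc 1 m, (∑ k ∈ Icc 1 m, w k * N k l) • e l := by
  calc ∑ k ∈ Icc 1 m, w k • ⁅e k, e (m + 1)⁆
      = ∑ k ∈ Icc 1 m, ∑ l ∈ Icc 1 m, (w k * N k l) • e l :=
        sum_congr rfl fun k hk ↦ by
          obtain ⟨hk1, hkm⟩ := mem_Icc.mp hk
          simp only [heN k hk1 hkm, smul_sum, smul_smul]
    _ = ∑ l ∈ Icc 1 m, (∑ k ∈ Icc 1 m, w k * N k l) • e l := by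
        rw [sum_comm]; simp only [sum_smul]

theorem sum_smul_mem_center (hspan : Submodule.span F (e '' ↑(Icc 1 (m + 1))) = ⊤)
    (hee : ∀ j k : ℕ, 1 ≤ j → j ≤ m → 1 ≤ k → k ≤ m → ⁅e j, e k⁆ = 0)
    (heN : ∀ k : ℕ, 1 ≤ k → k ≤ m → ⁅e k, e (m + 1)⁆ = ∑ l ∈ Icc 1 m, N k l • e l)
    {v : ℕ → F} (hker : ∀ l : ℕ, 1 ≤ l → l ≤ m → ∑ k ∈ Icc 1 m, v k * N k l = 0) :
    ∑ k ∈ Icc 1 m, v k • e k ∈ LieAlgebra.center F L := by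
  refine LieAlgebra.mem_center_of_span_eq_top hspan ?_
  rintro _ ⟨j, hj, rfl⟩
  obtain ⟨hj1, hjm⟩ := mem_Icc.mp hj
  rcases hjm.lt_or_eq with hjm | rfl
  · rw [lie_sum]
    exact sum_eq_zero fun k hk ↦ by
      rw [lie_smul, hee j k hj1 (by omega) (mem_Icc.mp hk).1 (mem_Icc.mp hk).2, smul_zero]
  · calc ⁅e (m + 1), ∑ k ∈ Icc 1 m, v k • e k⁆ = -∑ k ∈ Icc 1 m, v k • ⁅e k, e (m + 1)⁆ := by
          rw [lie_sum, ← sum_neg_distrib]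
          exact sum_congr rfl fun k _ ↦ by rw [lie_smul, ← lie_skew (e (m + 1)) (e k), smul_neg]
      _ = 0 := by
          rw [sum_smul_lie_eq_sum_smul heN, sum_eq_zero fun l hl ↦ by
            rw [hker l (mem_Icc.mp hl).1 (mem_Icc.mp hl).2, zero_smul], neg_zero]

theorem derivedSeries_one_le_span_lie (hspan : Submodule.span F (e '' ↑(Icc 1 (m + 1))) = ⊤)
    (hee : ∀ j k : ℕ, 1 ≤ j → j ≤ m → 1 ≤ k → k ≤ m → ⁅e j, e k⁆ = 0) :
    LieAlgebra.derivedSeries F L 1 ≤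
      Submodule.span F ((fun k ↦ ⁅e k, e (m + 1)⁆) '' ↑(Icc 1 m)) := by
  refine LieAlgebra.derivedSeries_one_le_of_span_eq_top hspan ?_
  have hgen : ∀ i, 1 ≤ i → i ≤ m →
      ⁅e i, e (m + 1)⁆ ∈ Submodule.span F ((fun k ↦ ⁅e k, e (m + 1)⁆) '' ↑(Icc 1 m)) :=
    fun i hi1 hi2 ↦ Submodule.subset_span ⟨i, by simp [hi1, hi2], rfl⟩
  rintro _ ⟨j, hj, rfl⟩ _ ⟨k, hk, rfl⟩
  obtain ⟨hj1, hjm⟩ := mem_Icc.mp hj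
  obtain ⟨hk1, hkm⟩ := mem_Icc.mp hk
  rcases hjm.lt_or_eq with hjm | rfl <;> rcases hkm.lt_or_eq with hkm | rfl
  · rw [hee j k hj1 (by omega) hk1 (by omega)]
    exact zero_mem _
  · exact hgen j hj1 (by omega)
  · rw [← lie_skew]
    exact neg_mem (hgen k hk1 (by omega))
  · rw [lie_self]
    exact zero_mem _

theorem sum_smul_notMem_span_lie (hind : LinearIndepOn F e ↑(Icc 1 m))
    (heN : ∀ k : ℕ, 1 ≤ k → k ≤ m → ⁅e k, e (m + 1)⁆ = ∑ l ∈ Icc 1 m, N k l • e l)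
    {v : ℕ → F} (him : ¬ ∃ w : ℕ → F, ∀ l : ℕ, 1 ≤ l → l ≤ m →
      ∑ k ∈ Icc 1 m, w k * N k l = v l) :
    ∑ k ∈ Icc 1 m, v k • e k ∉ Submodule.span F ((fun k ↦ ⁅e k, e (m + 1)⁆) '' ↑(Icc 1 m)) := by
  rw [Submodule.mem_span_image_finset_iff_exists_fun']
  rintro ⟨w, hw⟩
  rw [sum_smul_lie_eq_sum_smul heN] at hw
  exact him ⟨w, fun l hl1 hlm ↦ linearIndepOn_finset_iffₛ.mp hind _ _ hw l (by simp [hl1, hlm])⟩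

end StructureConstants

theorem abelian_plus_one_decomposable_of_kernel_not_in_image
    (F : Type*) [Field F] (m : ℕ) (hm : 2 ≤ m)
    (L : Type*) [LieRing L] [LieAlgebra F L] (e : ℕ → L) (N : ℕ → ℕ → F)
    (indep : LinearIndependent F (fun i : Fin (m + 1) => e (i.val + 1)))
    (spans : Submodule.span F (Set.range (fun i : Fin (m + 1) => e (i.val + 1))) = ⊤)
    (brkt_ee : ∀ j k : ℕ, 1 ≤ j → j ≤ m → 1 ≤ k → k ≤ m → ⁅e j, e k⁆ = 0)
    (brkt_eN : ∀ k : ℕ, 1 ≤ k → k ≤ m →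
      ⁅e k, e (m + 1)⁆ = ∑ l ∈ Finset.Icc 1 m, N k l • e l)
    (v : ℕ → F)
    (hker : ∀ l : ℕ, 1 ≤ l → l ≤ m → ∑ k ∈ Finset.Icc 1 m, v k * N k l = 0)
    (him : ¬ ∃ w : ℕ → F, ∀ l : ℕ, 1 ≤ l → l ≤ m →
      ∑ k ∈ Finset.Icc 1 m, w k * N k l = v l) :
    ∃ I J : LieIdeal F L, I ≠ ⊥ ∧ J ≠ ⊥ ∧ I ⊓ J = ⊥ ∧ I ⊔ J = ⊤ := by
  have hrange := range_fin_val_add_one (m + 1)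
  have hind : LinearIndepOn F e ↑(Finset.Icc 1 (m + 1)) :=
    hrange ▸ (linearIndepOn_range_iff (fun _ _ h ↦ Fin.ext (by omega)) e).mpr indep
  have hspan : Submodule.span F (e '' ↑(Finset.Icc 1 (m + 1))) = ⊤ := by
    rwa [← hrange, ← Set.range_comp]
  have hrank : 1 < Module.rank F L := by
    refine lt_of_lt_of_le ?_ (Module.le_rank_iff.mpr ⟨_, indep⟩)
    exact_mod_cast (by omega : 1 < m + 1)
  obtain ⟨I, J, hI, hJ, hIJ⟩ := LieAlgebra.exists_isCompl_of_mem_center_of_notMem_derivedSeries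
    (sum_smul_mem_center hspan brkt_ee brkt_eN hker)
    (fun hd ↦ sum_smul_notMem_span_lie
      (hind.mono (Finset.coe_subset.mpr (Finset.Icc_subset_Icc_right (by omega))))
      brkt_eN him (derivedSeries_one_le_span_lie hspan brkt_ee hd))
    hrank
  exact ⟨I, J, hI, hJ, hIJ.inf_eq_bot, hIJ.sup_eq_top⟩
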